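/- Let X be a nominal set, x ∈ X, and a an atom of level i. Then the atoms-abstraction [a]x, as an element of the powerset of 𝔸 × X with the pointwise action, has finite support and supp([a]x) = supp(x) \ {a}; in particular a # [a]x. -/

import Mathlib

/-- Atoms: pairs of a level (an integer) and an index (a natural number). -/
abbrev Atom : Type := ℤ × ℕ

/-- The level of an atom is its first component. -/
def level (a : Atom) : ℤ := a.1

/-- The group of finite, level-respecting permutations of atoms, as a
subgroup of the group of all bijections of `Atom`. -/
def APermSub : Subgroup (Equiv.Perm Atom) where
  carrier := {π | {a : Atom | π a ≠ a}.Finite ∧ ∀ a, level (π a) = level a}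
  one_mem' := ⟨Set.Finite.subset Set.finite_empty (fun _ ha => absurd rfl ha), fun _ => rfl⟩
  mul_mem' := by
    rintro π σ ⟨hπf, hπl⟩ ⟨hσf, hσl⟩
    refine ⟨(hπf.union hσf).subset ?_, fun a => ?_⟩
    · intro a ha
      rw [Set.mem_union]
      by_contra h
      push_neg at h
      simp only [Set.mem_setOf_eq, not_not] at h
      exact ha (by simp only [Set.mem_setOf_eq, Equiv.Perm.mul_apply, h.2, h.1, not_true] at *)
    · rw [Equiv.Perm.mul_apply, hπl, hσl]
  inv_mem' := by
    rintro π ⟨hf, hl⟩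
    refine ⟨hf.subset ?_, fun a => ?_⟩
    · intro a ha
      simp only [Set.mem_setOf_eq] at ha ⊢
      intro h
      apply ha
      conv_lhs => rw [← h]
      exact Equiv.symm_apply_apply π a
    · conv_rhs => rw [← Equiv.apply_symm_apply π a]
      exact (hl _).symm

/-- `A` supports `x` when every permutation fixing `A` pointwise fixes `x`. -/
def NSupports {X : Type*} [SMul APermSub X] (A : Set Atom) (x : X) : Prop :=
  ∀ π : APermSub, (∀ a ∈ A, (π : Equiv.Perm Atom) a = a) → π • x = x

/-- A set with a permutation action is nominal when every element has a
finite supporting set of atoms. -/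
def IsNominal (X : Type*) [SMul APermSub X] : Prop :=
  ∀ x : X, ∃ A : Set Atom, A.Finite ∧ NSupports A x

/-- The support of `x`: the intersection of all finite supporting sets. -/
def nsupp {X : Type*} [SMul APermSub X] (x : X) : Set Atom :=
  ⋂₀ {A : Set Atom | A.Finite ∧ NSupports A x}

/-- Atoms-abstraction `[a]x`, as a subset of `Atom × X`. -/
def absAtom {X : Type*} [MulAction APermSub X] (a : Atom) (x : X) : Set (Atom × X) :=
  {p : Atom × X | ∃ π : APermSub,
     (∀ c ∈ nsupp x \ {a}, (π : Equiv.Perm Atom) c = c) ∧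
     p = ((π : Equiv.Perm Atom) a, π • x)}

open Pointwise

/-! Finite supports of an element are closed under intersection, so `supp x` is itself its least
finite support. The set `[a]x` is the orbit of `(a, x)` under the permutations fixing
`supp x \ {a}`, so that set supports it. Conversely, if `c ∈ supp x \ {a}` lay outside a finite
support of `[a]x`, the transposition of `c` with a fresh atom would fix `[a]x` and `a`, hence `x`
(as `(a, x) ∈ [a]x`), contradicting `c ∈ supp x`. -/

section Permutations

lemma APermSub.finite_moved (π : APermSub) : {a | (π : Equiv.Perm Atom) a ≠ a}.Finite := π.2.1

lemma APermSub.level_apply (π : APermSub) (a : Atom) : level ((π : Equiv.Perm Atom) a) = level a :=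
  π.2.2 a

lemma exists_level_eq_notMem (l : ℤ) {B : Set Atom} (hB : B.Finite) :
    ∃ e : Atom, level e = l ∧ e ∉ B := by
  obtain ⟨n, hn⟩ :=
    (hB.preimage (Set.injOn_of_injective (Prod.mk_right_injective l))).exists_notMem
  exact ⟨(l, n), rfl, hn⟩

def permSwap (c d : Atom) (h : level c = level d) : APermSub :=
  ⟨Equiv.swap c d, by
    refine ⟨((Set.finite_singleton d).insert c).subset fun a ha => ?_, fun a => ?_⟩
    · by_contra hmem
      simp only [Set.mem_insert_iff, Set.mem_singleton_iff, not_or] at hmem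
      exact ha (Equiv.swap_apply_of_ne_of_ne hmem.1 hmem.2)
    · rw [Equiv.swap_apply_def]
      split_ifs with hac had
      · rw [hac, h]
      · rw [had, h]
      · rfl⟩

variable {c d : Atom} {h : level c = level d}

@[simp] lemma coe_permSwap : ((permSwap c d h : APermSub) : Equiv.Perm Atom) = Equiv.swap c d :=
  rfl

lemma permSwap_comm : permSwap c d h = permSwap d c h.symm :=
  Subtype.ext (Equiv.swap_comm c d)

lemma moved_swap_mul_subset {α : Type*} [DecidableEq α] (f : Equiv.Perm α) (c : α) :
    {a | (Equiv.swap c (f c) * f) a ≠ a} ⊆ {a | f a ≠ a} \ {c} := by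
  intro a ha
  change Equiv.swap c (f c) (f a) ≠ a at ha
  refine ⟨fun hfa => ha ?_, fun hac => ha ?_⟩
  · rw [hfa, Equiv.swap_apply_def]
    split_ifs with hac hafc
    · rw [← hac, hfa]
    · exact f.injective (hafc.symm.trans hfa.symm)
    · rfl
  · rw [Set.mem_singleton_iff.1 hac, Equiv.swap_apply_right]

end Permutations

section Support

variable {X : Type*} [MulAction APermSub X] {A B : Set Atom} {x : X}

def FinitelySupported {Y : Type*} [SMul APermSub Y] (y : Y) : Prop :=
  ∃ A : Set Atom, A.Finite ∧ NSupports A y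

lemma NSupports.mono (hA : NSupports A x) (hAB : A ⊆ B) : NSupports B x :=
  fun π hπ => hA π fun a ha => hπ a (hAB ha)

lemma NSupports.permSwap_smul {c d : Atom} (h : level c = level d) (hA : NSupports A x)
    (hc : c ∉ A) (hd : d ∉ A) : permSwap c d h • x = x :=
  hA _ fun _ he => Equiv.swap_apply_of_ne_of_ne (ne_of_mem_of_not_mem he hc)
    (ne_of_mem_of_not_mem he hd)

/-- A transposition of two atoms missing different supports is conjugated, by a transposition
with a fresh atom, into a product of transpositions each missing a single support. -/
lemma permSwap_smul_of_notMem_of_notMem {c d : Atom} (h : level c = level d)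
    (hAf : A.Finite) (hBf : B.Finite) (hA : NSupports A x) (hB : NSupports B x)
    (hcB : c ∉ B) (hdA : d ∉ A) : permSwap c d h • x = x := by
  rcases eq_or_ne d c with rfl | hdc
  · rw [show permSwap d d h = 1 from Subtype.ext (Equiv.swap_self d), one_smul]
  obtain ⟨e, hel, he⟩ := exists_level_eq_notMem (level c) ((hAf.union hBf).insert d)
  simp only [Set.mem_insert_iff, Set.mem_union, not_or] at he
  obtain ⟨hde, heA, heB⟩ := he
  have hconj : permSwap c d h = permSwap e c hel * permSwap d e (h.symm.trans hel.symm) *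
      permSwap e c hel :=
    Subtype.ext (Equiv.swap_mul_swap_mul_swap (Ne.symm hde) hdc).symm
  rw [hconj, mul_smul, mul_smul, hB.permSwap_smul _ heB hcB, hA.permSwap_smul _ hdA heA,
    hB.permSwap_smul _ heB hcB]

lemma permSwap_smul_of_notMem_inter {c d : Atom} (h : level c = level d)
    (hAf : A.Finite) (hBf : B.Finite) (hA : NSupports A x) (hB : NSupports B x)
    (hc : c ∉ A ∩ B) (hd : d ∉ A ∩ B) : permSwap c d h • x = x := by
  rw [Set.mem_inter_iff, not_and_or] at hc hd
  rcases hc with hc | hc <;> rcases hd with hd | hd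
  · exact hA.permSwap_smul h hc hd
  · rw [permSwap_comm]
    exact permSwap_smul_of_notMem_of_notMem _ hAf hBf hA hB hd hc
  · exact permSwap_smul_of_notMem_of_notMem h hAf hBf hA hB hc hd
  · exact hB.permSwap_smul h hc hd

/-- Peel off the transposition `(c (π c))` for a moved atom `c`; this fixes `c` and creates no
new moved atom, so induction on the number of moved atoms applies. -/
lemma NSupports.inter (hAf : A.Finite) (hBf : B.Finite) (hA : NSupports A x)
    (hB : NSupports B x) : NSupports (A ∩ B) x := by
  intro π hπ
  induction hn : {a | (π : Equiv.Perm Atom) a ≠ a}.ncard using Nat.strong_induction_on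
    generalizing π with
  | _ n ih =>
  by_cases hone : π = 1
  · rw [hone, one_smul]
  obtain ⟨c, hc⟩ : ∃ c, (π : Equiv.Perm Atom) c ≠ c := by
    by_contra! hfix
    exact hone (Subtype.ext (Equiv.ext hfix))
  set d := (π : Equiv.Perm Atom) c
  have hlev : level c = level d := (APermSub.level_apply π c).symm
  have hd : (π : Equiv.Perm Atom) d ≠ d := fun hd => hc ((π : Equiv.Perm Atom).injective hd)
  have hcAB : c ∉ A ∩ B := fun hmem => hc (hπ c hmem)
  have hdAB : d ∉ A ∩ B := fun hmem => hd (hπ d hmem)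
  have hfewer : {a | ((permSwap c d hlev * π : APermSub) : Equiv.Perm Atom) a ≠ a}.ncard < n :=
    hn ▸ (Set.ncard_le_ncard (moved_swap_mul_subset _ c) (APermSub.finite_moved π).sdiff).trans_lt
      (Set.ncard_sdiff_singleton_lt_of_mem hc (APermSub.finite_moved π))
  have hfix : ∀ a ∈ A ∩ B, ((permSwap c d hlev * π : APermSub) : Equiv.Perm Atom) a = a :=
    fun a ha => by
      simp only [Subgroup.coe_mul, coe_permSwap, Equiv.Perm.mul_apply, hπ a ha]
      exact Equiv.swap_apply_of_ne_of_ne (ne_of_mem_of_not_mem ha hcAB)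
        (ne_of_mem_of_not_mem ha hdAB)
  have hdecomp : π = permSwap c d hlev * (permSwap c d hlev * π) := by
    rw [← mul_assoc, show permSwap c d hlev * permSwap c d hlev = 1 from
      Subtype.ext (Equiv.swap_mul_self c d), one_mul]
  rw [hdecomp, mul_smul, ih _ hfewer _ hfix rfl,
    permSwap_smul_of_notMem_inter hlev hAf hBf hA hB hcAB hdAB]

lemma nsupp_subset (hAf : A.Finite) (hA : NSupports A x) : nsupp x ⊆ A :=
  Set.sInter_subset_of_mem ⟨hAf, hA⟩

/-- A finite support of minimal cardinality is contained in every finite support, since its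
intersection with another finite support is again one. -/
lemma FinitelySupported.nsupports_nsupp (hx : FinitelySupported x) : NSupports (nsupp x) x := by
  classical
  have hex : ∃ n, ∃ S : Set Atom, S.Finite ∧ NSupports S x ∧ S.ncard = n :=
    let ⟨A, hAf, hA⟩ := hx; ⟨_, A, hAf, hA, rfl⟩
  obtain ⟨S, hSf, hS, hSn⟩ := Nat.find_spec hex
  refine hS.mono fun c hc A ⟨hAf, hA⟩ => ?_
  have hSA : S ∩ A = S := Set.eq_of_subset_of_ncard_le Set.inter_subset_left
    (hSn ▸ Nat.find_min' hex ⟨_, hSf.inter_of_left A, hS.inter hSf hAf hA, rfl⟩) hSf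
  exact (hSA.symm ▸ hc : c ∈ S ∩ A).2

lemma FinitelySupported.finite_nsupp (hx : FinitelySupported x) : (nsupp x).Finite :=
  let ⟨_, hAf, hA⟩ := hx; hAf.subset (nsupp_subset hAf hA)

lemma NSupports.smul (hA : NSupports A x) (π : APermSub) :
    NSupports ((π : Equiv.Perm Atom) '' A) (π • x) := by
  intro σ hσ
  have hconj : (π⁻¹ * σ * π) • x = x := hA _ fun a ha => by
    simp [hσ _ (Set.mem_image_of_mem _ ha)]
  conv_rhs => rw [← hconj, smul_smul, ← mul_assoc, ← mul_assoc, mul_inv_cancel, one_mul]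
  rw [smul_smul]

lemma notMem_nsupp_of_permSwap_smul {c d : Atom} (h : level c = level d)
    (hx : FinitelySupported x) (hd : d ∉ nsupp x) (hs : permSwap c d h • x = x) :
    c ∉ nsupp x := by
  intro hc
  have hsupp := hx.nsupports_nsupp.smul (permSwap c d h)
  rw [hs] at hsupp
  have hc' := nsupp_subset (hx.finite_nsupp.image _) hsupp hc
  rw [coe_permSwap, Set.mem_image_equiv, Equiv.symm_swap, Equiv.swap_apply_left] at hc'
  exact hd hc'

end Support

section Abstraction

variable {X : Type*} [MulAction APermSub X]

lemma nsupports_of_forall_smul_subset {Y : Type*} [MulAction APermSub Y] {A : Set Atom}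
    {Z : Set Y} (h : ∀ π : APermSub, (∀ a ∈ A, (π : Equiv.Perm Atom) a = a) → π • Z ⊆ Z) :
    NSupports A Z := by
  intro π hπ
  refine (h π hπ).antisymm (Set.subset_smul_set_iff.2 (h π⁻¹ fun a ha => ?_))
  rw [InvMemClass.coe_inv, Equiv.Perm.inv_eq_iff_eq, hπ a ha]

lemma smul_absAtom_subset (a : Atom) (x : X) {π : APermSub}
    (hπ : ∀ c ∈ nsupp x \ {a}, (π : Equiv.Perm Atom) c = c) : π • absAtom a x ⊆ absAtom a x := by
  rintro _ ⟨_, ⟨σ, hσ, rfl⟩, rfl⟩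
  refine ⟨π * σ, fun c hc => ?_, Prod.ext rfl (mul_smul π σ x).symm⟩
  rw [Subgroup.coe_mul, Equiv.Perm.mul_apply, hσ c hc, hπ c hc]

lemma nsupports_absAtom (a : Atom) (x : X) : NSupports (nsupp x \ {a}) (absAtom a x) :=
  nsupports_of_forall_smul_subset fun _ => smul_absAtom_subset a x

lemma mem_absAtom_self (a : Atom) (x : X) : (a, x) ∈ absAtom a x :=
  ⟨1, fun _ _ => rfl, Prod.ext rfl (one_smul _ x).symm⟩

lemma eq_of_mem_absAtom {a : Atom} {x y : X} (hx : FinitelySupported x)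
    (h : (a, y) ∈ absAtom a x) : y = x := by
  obtain ⟨σ, hσ, hay⟩ := h
  obtain ⟨hσa, rfl⟩ := Prod.mk.inj hay
  refine hx.nsupports_nsupp σ fun c hc => ?_
  by_cases hca : c = a
  · rw [hca, ← hσa]
  · exact hσ c ⟨hc, hca⟩

lemma diff_subset_nsupp_absAtom {a : Atom} {x : X} (hx : FinitelySupported x) :
    nsupp x \ {a} ⊆ nsupp (absAtom a x) := by
  rintro c ⟨hc, hca⟩ B ⟨hBf, hB⟩
  by_contra hcB
  obtain ⟨d, hdl, hd⟩ := exists_level_eq_notMem (level c) ((hBf.union hx.finite_nsupp).insert a)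
  simp only [Set.mem_insert_iff, Set.mem_union, not_or] at hd
  obtain ⟨hda, hdB, hdx⟩ := hd
  set s := permSwap c d hdl.symm
  have hsa : s • ((a, x) : Atom × X) = (a, s • x) :=
    Prod.ext (Equiv.swap_apply_of_ne_of_ne (fun hac => hca hac.symm) (Ne.symm hda)) rfl
  have hmem : (a, s • x) ∈ absAtom a x := by
    rw [← hsa, ← hB.permSwap_smul _ hcB hdB]
    exact Set.smul_mem_smul_set (mem_absAtom_self a x)
  exact notMem_nsupp_of_permSwap_smul _ hx hdx (eq_of_mem_absAtom hx hmem) hc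

lemma nsupp_absAtom {a : Atom} {x : X} (hx : FinitelySupported x) :
    nsupp (absAtom a x) = nsupp x \ {a} :=
  (nsupp_subset hx.finite_nsupp.sdiff (nsupports_absAtom a x)).antisymm
    (diff_subset_nsupp_absAtom hx)

end Abstraction

/-- Atoms-abstraction `[a]x`, as an element of the powerset of `Atom × X` with the
pointwise action, has finite support, and `supp ([a]x) = supp x \ {a}`;
in particular `a # [a]x`. -/
theorem supp_absAtom {X : Type*} [MulAction APermSub X]
    (hX : IsNominal X) (a : Atom) (x : X) :
    (∃ A : Set Atom, A.Finite ∧ NSupports A (absAtom a x)) ∧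
      nsupp (absAtom a x) = nsupp x \ {a} ∧ a ∉ nsupp (absAtom a x) := by
  have hx : FinitelySupported x := hX x
  refine ⟨⟨_, hx.finite_nsupp.sdiff, nsupports_absAtom a x⟩, nsupp_absAtom hx, ?_⟩
  rw [nsupp_absAtom hx]
  exact fun ha => ha.2 rfl
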